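/- Let f: ℝⁿ → ℝ be convex with nonempty level set C := f⁻¹((-∞,0]). Let {x_i} be a sequence with x_0 given, where at each step y_i ∈ ∂f(x_i) (if f(x_i) > 0 then y_i ≠ 0), and x_{i+1} is the projection of x_i onto the intersection F_i of a finite collection of halfspaces of the form {x : f(x_k) + ⟨y_k, x - x_k⟩ ≤ 0}, with k = i among them. Then {x_i} converges to a point x̄ with f(x̄) ≤ 0. -/

import Mathlib

open RealInnerProductSpace Filter

/-- The convex subdifferential of `f` at `x`. -/
def subdiff {n : ℕ} (f : EuclideanSpace ℝ (Fin n) → ℝ) (x : EuclideanSpace ℝ (Fin n)) :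
    Set (EuclideanSpace ℝ (Fin n)) :=
  {y | ∀ z, f x + ⟪y, z - x⟫ ≤ f z}

/-!
Every point of `C = {f ≤ 0}` lies in each cut halfspace, so each step is the projection of `x i`
onto a closed convex set containing `C`, and Pythagoras gives the Fejér inequality
`‖x (i+1) - c‖² + ‖x i - x (i+1)‖² ≤ ‖x i - c‖²` for all `c ∈ C`. Hence the sequence is bounded,
its steps tend to `0`, and its subgradients are bounded. Since `x (i+1)` lies in the `i`-th cut,
`f (x i) ≤ ‖y i‖ ‖x i - x (i+1)‖ → 0`, so every cluster point `x̄` lies in `C`; Fejér monotonicity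
with respect to `x̄` then forces the whole sequence to converge to `x̄`.
-/

section InnerProductSpace

variable {E : Type*} [NormedAddCommGroup E] [InnerProductSpace ℝ E]

theorem convex_setOf_add_inner_sub_le_zero (a : ℝ) (y x : E) :
    Convex ℝ {z : E | a + ⟪y, z - x⟫ ≤ 0} := by
  simp_rw [inner_sub_right, ← le_sub_iff_add_le', zero_sub, sub_le_iff_le_add]
  exact convex_halfSpace_le (innerₗ E y).isLinear _

theorem norm_sub_sq_add_norm_sub_sq_le_of_forall_norm_sub_le {K : Set E} (hK : Convex ℝ K)
    {u p c : E} (hp : p ∈ K) (hmin : ∀ z ∈ K, ‖u - p‖ ≤ ‖u - z‖) (hc : c ∈ K) :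
    ‖p - c‖ ^ 2 + ‖u - p‖ ^ 2 ≤ ‖u - c‖ ^ 2 := by
  have : Nonempty K := ⟨⟨p, hp⟩⟩
  have hinf : ‖u - p‖ = ⨅ z : K, ‖u - z‖ :=
    le_antisymm (le_ciInf fun z => hmin z z.2)
      (ciInf_le (f := fun z : K => ‖u - z‖) ⟨0, by rintro _ ⟨z, rfl⟩; positivity⟩ ⟨p, hp⟩)
  have hobtuse : ⟪u - p, c - p⟫ ≤ 0 := (norm_eq_iInf_iff_real_inner_le_zero hK hp).1 hinf c hc
  have hpyth : ‖u - c‖ ^ 2 = ‖u - p‖ ^ 2 - 2 * ⟪u - p, c - p⟫ + ‖p - c‖ ^ 2 := by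
    rw [← sub_sub_sub_cancel_right u c p, norm_sub_sq_real, norm_sub_rev c p]
  linarith

theorem le_norm_mul_norm_sub_of_add_inner_sub_le_zero {a : ℝ} {y x p : E}
    (h : a + ⟪y, p - x⟫ ≤ 0) : a ≤ ‖y‖ * ‖x - p‖ := by
  have : ⟪y, x - p⟫ = -⟪y, p - x⟫ := by rw [← inner_neg_right, neg_sub]
  linarith [real_inner_le_norm y (x - p)]

theorem exists_norm_le_of_subgradient [ProperSpace E] {f : E → ℝ} (hf : Continuous f)
    (c : E) (r : ℝ) :
    ∃ M, ∀ x ∈ Metric.closedBall c r, ∀ y : E, (∀ z, f x + ⟪y, z - x⟫ ≤ f z) → ‖y‖ ≤ M := by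
  obtain ⟨B, hB⟩ := (isCompact_closedBall c (r + 1)).exists_bound_of_continuousOn hf.continuousOn
  refine ⟨2 * B, fun x hx y hy => ?_⟩
  have hx' : x ∈ Metric.closedBall c (r + 1) := Metric.closedBall_subset_closedBall (by linarith) hx
  have hfx := abs_le.1 (hB x hx')
  rcases eq_or_ne y 0 with rfl | hy0
  · simp only [norm_zero]; linarith [abs_nonneg (f x)]
  · -- test the subgradient inequality at the unit step in the direction of `y`
    set z := x + ‖y‖⁻¹ • y
    have hz : z ∈ Metric.closedBall c (r + 1) := by
      rw [Metric.mem_closedBall] at hx ⊢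
      calc dist z c ≤ dist z x + dist x c := dist_triangle z x c
        _ ≤ 1 + r := by
          gcongr
          rw [dist_eq_norm, add_sub_cancel_left, norm_smul, norm_inv, norm_norm,
            inv_mul_cancel₀ (norm_ne_zero_iff.2 hy0)]
        _ = r + 1 := add_comm 1 r
    have hyz : ⟪y, z - x⟫ = ‖y‖ := by
      rw [add_sub_cancel_left, real_inner_smul_right, real_inner_self_eq_norm_sq]
      field_simp
    linarith [hy z, abs_le.1 (hB z hz)]

end InnerProductSpace

theorem tendsto_atTop_zero_of_add_sq_le {a b : ℕ → ℝ} (ha : ∀ i, 0 ≤ a i)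
    (h : ∀ i, a (i + 1) + b i ^ 2 ≤ a i) : Tendsto b atTop (nhds 0) := by
  have hanti : Antitone a := antitone_nat_of_succ_le fun i => by linarith [h i, sq_nonneg (b i)]
  have hconv := tendsto_atTop_ciInf hanti ⟨0, by rintro _ ⟨i, rfl⟩; exact ha i⟩
  have hdiff : Tendsto (fun i => a i - a (i + 1)) atTop (nhds 0) := by
    simpa using hconv.sub (hconv.comp (tendsto_add_atTop_nat 1))
  have hsq : Tendsto (fun i => b i ^ 2) atTop (nhds 0) :=
    squeeze_zero (fun i => sq_nonneg _) (fun i => by linarith [h i]) hdiff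
  rw [tendsto_zero_iff_abs_tendsto_zero]
  simpa [Function.comp_def, Real.sqrt_sq_eq_abs] using hsq.sqrt

theorem tendsto_of_antitone_dist_of_tendsto_subseq {α : Type*} [PseudoMetricSpace α]
    {x : ℕ → α} {a : α} {φ : ℕ → ℕ} (hx : Antitone fun i => dist (x i) a) (hφ : StrictMono φ)
    (hlim : Tendsto (x ∘ φ) atTop (nhds a)) : Tendsto x atTop (nhds a) := by
  rw [tendsto_iff_dist_tendsto_zero] at hlim ⊢
  exact (tendsto_iff_tendsto_subseq_of_antitone hx hφ.tendsto_atTop).2 hlim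

theorem SGQP_basic_convergence_general
    {n : ℕ} (f : EuclideanSpace ℝ (Fin n) → ℝ)
    (hconv : ConvexOn ℝ Set.univ f)
    (hfeas : {x | f x ≤ 0}.Nonempty)
    (x y : ℕ → EuclideanSpace ℝ (Fin n))
    (S : ℕ → Finset ℕ)
    (hS_mem : ∀ i, i ∈ S i)
    (hy : ∀ i, y i ∈ subdiff f (x i))
    (F : ℕ → Set (EuclideanSpace ℝ (Fin n)))
    (hF : ∀ i, F i = ⋂ k ∈ S i, {z | f (x k) + ⟪y k, z - x k⟫ ≤ 0})
    (hproj_mem : ∀ i, x (i + 1) ∈ F i)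
    (hproj_min : ∀ i, ∀ z ∈ F i, ‖x i - x (i + 1)‖ ≤ ‖x i - z‖) :
    ∃ xbar, Tendsto x atTop (nhds xbar) ∧ f xbar ≤ 0 := by
  obtain ⟨c, hc⟩ := hfeas
  have hcont : Continuous f := continuousOn_univ.1 (hconv.continuousOn isOpen_univ)
  have hfejer (c' : _) (hc' : f c' ≤ 0) (i : ℕ) :
      ‖x (i + 1) - c'‖ ^ 2 + ‖x i - x (i + 1)‖ ^ 2 ≤ ‖x i - c'‖ ^ 2 := by
    have hFconv : Convex ℝ (F i) :=
      hF i ▸ convex_iInter₂ fun k _ => convex_setOf_add_inner_sub_le_zero _ _ _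
    have hc'F : c' ∈ F i := hF i ▸ Set.mem_iInter₂.2 fun k _ => (hy k c').trans hc'
    exact norm_sub_sq_add_norm_sub_sq_le_of_forall_norm_sub_le hFconv (hproj_mem i)
      (hproj_min i) hc'F
  have hanti (c' : _) (hc' : f c' ≤ 0) : Antitone fun i => dist (x i) c' :=
    antitone_nat_of_succ_le fun i => by
      simp only [dist_eq_norm]
      exact le_of_pow_le_pow_left₀ two_ne_zero (norm_nonneg _)
        (by linarith [hfejer c' hc' i, sq_nonneg ‖x i - x (i + 1)‖])
  have hball (i : ℕ) : x i ∈ Metric.closedBall c (dist (x 0) c) := hanti c hc (Nat.zero_le i)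
  have hstep : Tendsto (fun i => ‖x i - x (i + 1)‖) atTop (nhds 0) :=
    tendsto_atTop_zero_of_add_sq_le (fun i => sq_nonneg ‖x i - c‖) (hfejer c hc)
  obtain ⟨xbar, -, φ, hφ, hlim⟩ := (isCompact_closedBall c _).tendsto_subseq hball
  obtain ⟨M, hM⟩ := exists_norm_le_of_subgradient hcont c (dist (x 0) c)
  have hcut (i : ℕ) : f (x i) ≤ M * ‖x i - x (i + 1)‖ := by
    have hmem : f (x i) + ⟪y i, x (i + 1) - x i⟫ ≤ 0 :=
      Set.mem_iInter₂.1 (hF i ▸ hproj_mem i) i (hS_mem i)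
    exact (le_norm_mul_norm_sub_of_add_inner_sub_le_zero hmem).trans
      (mul_le_mul_of_nonneg_right (hM _ (hball i) _ (hy i)) (norm_nonneg _))
  have hfxbar : f xbar ≤ 0 := by
    refine le_of_tendsto_of_tendsto' ((hcont.tendsto xbar).comp hlim) ?_ fun j => hcut (φ j)
    simpa using (hstep.comp hφ.tendsto_atTop).const_mul M
  exact ⟨xbar, tendsto_of_antitone_dist_of_tendsto_subseq (hanti xbar hfxbar) hφ hlim, hfxbar⟩

/-- Basic convergence of the SGQP algorithm for the convex inequality problem:
projecting successively onto intersections of subgradient cut halfspaces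
(always including the current one) converges to a solution. -/
theorem SGQP_basic_convergence
    {n : ℕ} (f : EuclideanSpace ℝ (Fin n) → ℝ)
    (hconv : ConvexOn ℝ Set.univ f)
    (hfeas : {x | f x ≤ 0}.Nonempty)
    (x y : ℕ → EuclideanSpace ℝ (Fin n))
    (S : ℕ → Finset ℕ)
    (hS_mem : ∀ i, i ∈ S i) (hS_le : ∀ i, ∀ k ∈ S i, k ≤ i)
    (hy : ∀ i, y i ∈ subdiff f (x i))
    (hy_ne : ∀ i, 0 < f (x i) → y i ≠ 0)
    (F : ℕ → Set (EuclideanSpace ℝ (Fin n)))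
    (hF : ∀ i, F i = ⋂ k ∈ S i, {z | f (x k) + ⟪y k, z - x k⟫ ≤ 0})
    (hproj_mem : ∀ i, x (i + 1) ∈ F i)
    (hproj_min : ∀ i, ∀ z ∈ F i, ‖x i - x (i + 1)‖ ≤ ‖x i - z‖) :
    ∃ xbar, Tendsto x atTop (nhds xbar) ∧ f xbar ≤ 0 :=
  SGQP_basic_convergence_general f hconv hfeas x y S hS_mem hy F hF hproj_mem hproj_min
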